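/- arXiv:2111.06169 — 3 statements merged into one kernel-verified Lean document; each statement's English description precedes it below -/
import Mathlib

section
/- Let c be a simple-model cost function on the infinite grid graph G with l layers, let s = (x_s, y_s, z_s) ∈ V, and let R = {(x, y, ζ) ∈ V : ξ⁻ ≤ x ≤ ξ⁺, υ⁻ ≤ y ≤ υ⁺} be a rectangle on a single layer ζ, where ξ⁻ ≤ ξ⁺ and υ⁻ ≤ υ⁺ are integers. Let r = (x_r, y_r, ζ) where x_r = max(ξ⁻, min(ξ⁺, x_s)) and y_r = max(υ⁻, min(υ⁺, y_s)) is the vertex of R that is coordinatewise closest to s. Then min_{v ∈ R} dist_{(G,c)}(s, v) = dist_{(G,c)}(s, r). -/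
/-!
Clamping the horizontal coordinates of every vertex into the bounding box of `s` and `r` maps
each edge either to a single vertex or to an edge of the same direction on the same layer, hence
of the same cost. So it turns every `s`-`v` walk into a walk from the clamp of `s` to the clamp
of `v` that is no more expensive; and for `v ∈ R` the clamp fixes `s` and sends `v` to `r`.
-/

/-- Vertices of the infinite grid graph: `(x, y, z)` where `z` is the layer. -/
abbrev Vtx : Type := ℤ × ℤ × ℤ

/-- Two vertices of the infinite grid graph with layers `1, …, l` are adjacent iff both have
their layer coordinate in `{1, …, l}` and they differ by exactly `1` in exactly one
coordinate.  An edge changing the first coordinate is horizontal, one changing the second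
coordinate is vertical, and one changing the third coordinate is a via. -/
def Adj (l : ℤ) (u v : Vtx) : Prop :=
  1 ≤ u.2.2 ∧ u.2.2 ≤ l ∧ 1 ≤ v.2.2 ∧ v.2.2 ≤ l ∧
    |u.1 - v.1| + |u.2.1 - v.2.1| + |u.2.2 - v.2.2| = 1

/-- Simple-model edge cost: a horizontal (resp. vertical) edge on layer `z` costs `ch z`
(resp. `cv z`) and a via between layers `z` and `z+1` costs `cvia z`. -/
def ecost (ch cv cvia : ℤ → ℝ) (u v : Vtx) : ℝ :=
  if u.1 ≠ v.1 then ch u.2.2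
  else if u.2.1 ≠ v.2.1 then cv u.2.2
  else cvia (min u.2.2 v.2.2)

/-- The cost of a walk (given as the list of its vertices) is the sum of its edge costs. -/
def wcost (c : Vtx → Vtx → ℝ) : List Vtx → ℝ
  | [] => 0
  | [_] => 0
  | u :: v :: P => c u v + wcost c (v :: P)

/-- `P` is a walk from `u` to `v` with respect to the adjacency relation `A`. -/
def IsWalkA (A : Vtx → Vtx → Prop) (P : List Vtx) (u v : Vtx) : Prop :=
  P ≠ [] ∧ P.Chain' A ∧ P.head? = some u ∧ P.getLast? = some v

/-- The distance between two vertices: the infimum cost of a walk between them. -/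
noncomputable def gdistA (A : Vtx → Vtx → Prop) (c : Vtx → Vtx → ℝ) (u v : Vtx) : ℝ :=
  sInf { m : ℝ | ∃ P, IsWalkA A P u v ∧ wcost c P = m }

/-- The distance from a vertex to a set of vertices. -/
noncomputable def gdistSetA (A : Vtx → Vtx → Prop) (c : Vtx → Vtx → ℝ) (u : Vtx)
    (T : Set Vtx) : ℝ :=
  sInf { m : ℝ | ∃ P v, v ∈ T ∧ IsWalkA A P u v ∧ wcost c P = m }

open Relation

section Walks

variable {A : Vtx → Vtx → Prop} {c : Vtx → Vtx → ℝ}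

theorem isWalkA_cons_cons_iff {x w u v : Vtx} {P : List Vtx} :
    IsWalkA A (x :: w :: P) u v ↔ x = u ∧ A u w ∧ IsWalkA A (w :: P) w v := by
  constructor
  · rintro ⟨-, hchain, hhead, hlast⟩
    obtain rfl : x = u := by simpa using hhead
    exact ⟨rfl, (List.isChain_cons_cons.1 hchain).1,
      List.cons_ne_nil _ _, (List.isChain_cons_cons.1 hchain).2, rfl, hlast⟩
  · rintro ⟨rfl, hxw, -, hchain, -, hlast⟩
    exact ⟨List.cons_ne_nil _ _, List.isChain_cons_cons.2 ⟨hxw, hchain⟩, rfl, hlast⟩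

theorem IsWalkA.cons {P : List Vtx} {u w v : Vtx} (hP : IsWalkA A P w v) (h : A u w) :
    IsWalkA A (u :: P) u v := by
  obtain ⟨w', P, rfl⟩ := List.exists_cons_of_ne_nil hP.1
  obtain rfl : w' = w := by simpa using hP.2.2.1
  exact isWalkA_cons_cons_iff.2 ⟨rfl, h, hP⟩

theorem wcost_cons_of_isWalkA {P : List Vtx} {u w v : Vtx} (hP : IsWalkA A P w v) :
    wcost c (u :: P) = c u w + wcost c P := by
  obtain ⟨w', P, rfl⟩ := List.exists_cons_of_ne_nil hP.1
  obtain rfl : w' = w := by simpa using hP.2.2.1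
  rfl

theorem exists_isWalkA_of_reflTransGen {u v : Vtx} (h : ReflTransGen A u v) :
    ∃ P, IsWalkA A P u v := by
  obtain ⟨P, hchain, hlast⟩ := List.exists_isChain_cons_of_relationReflTransGen h
  exact ⟨u :: P, List.cons_ne_nil _ _, hchain, rfl,
    by rw [← hlast]; exact List.getLast?_eq_some_getLast _⟩

theorem wcost_nonneg (hc : ∀ u v, A u v → 0 ≤ c u v) :
    ∀ {P : List Vtx}, P.IsChain A → 0 ≤ wcost c P
  | [], _ | [_], _ => le_rfl
  | _ :: _ :: _, hP => by
    rw [List.isChain_cons_cons] at hP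
    exact add_nonneg (hc _ _ hP.1) (wcost_nonneg hc hP.2)

theorem bddBelow_wcost_walks (hc : ∀ u v, A u v → 0 ≤ c u v) (u v : Vtx) :
    BddBelow {m | ∃ P, IsWalkA A P u v ∧ wcost c P = m} :=
  ⟨0, by rintro _ ⟨P, hP, rfl⟩; exact wcost_nonneg hc hP.2.1⟩

theorem IsWalkA.exists_map_wcost_le (f : Vtx → Vtx) (hc : ∀ u v, A u v → 0 ≤ c u v)
    (hf : ∀ u v, A u v → f u = f v ∨ A (f u) (f v) ∧ c (f u) (f v) ≤ c u v)
    {P : List Vtx} {u v : Vtx} (hP : IsWalkA A P u v) :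
    ∃ Q, IsWalkA A Q (f u) (f v) ∧ wcost c Q ≤ wcost c P := by
  induction P generalizing u with
  | nil => exact absurd rfl hP.1
  | cons x P ih =>
    cases P with
    | nil =>
      obtain ⟨-, -, hhead, hlast⟩ := hP
      obtain ⟨rfl, rfl⟩ : x = u ∧ x = v := by simp_all
      exact ⟨[f x], ⟨List.cons_ne_nil _ _, List.isChain_singleton _, rfl, rfl⟩, le_rfl⟩
    | cons w P =>
      obtain ⟨rfl, hxw, hwP⟩ := isWalkA_cons_cons_iff.1 hP
      obtain ⟨Q, hQ, hQcost⟩ := ih hwP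
      rw [wcost_cons_of_isWalkA hwP]
      rcases hf x w hxw with heq | ⟨hadj, hcost⟩
      · exact ⟨Q, heq ▸ hQ, by linarith [hc x w hxw]⟩
      · refine ⟨f x :: Q, hQ.cons hadj, ?_⟩
        rw [wcost_cons_of_isWalkA hQ]
        linarith

theorem gdistA_map_le (f : Vtx → Vtx) (hc : ∀ u v, A u v → 0 ≤ c u v)
    (hf : ∀ u v, A u v → f u = f v ∨ A (f u) (f v) ∧ c (f u) (f v) ≤ c u v)
    {u v : Vtx} (huv : ∃ P, IsWalkA A P u v) :
    gdistA A c (f u) (f v) ≤ gdistA A c u v := by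
  obtain ⟨P₀, hP₀⟩ := huv
  refine le_csInf ⟨_, P₀, hP₀, rfl⟩ ?_
  rintro _ ⟨P, hP, rfl⟩
  obtain ⟨Q, hQ, hQP⟩ := hP.exists_map_wcost_le f hc hf
  exact (csInf_le (bddBelow_wcost_walks hc _ _) ⟨Q, hQ, rfl⟩).trans hQP

end Walks

section Grid

variable {l : ℤ}

theorem ecost_pos_of_adj {ch cv cvia : ℤ → ℝ} (hch : ∀ z, 1 ≤ z → z ≤ l → 0 < ch z)
    (hcv : ∀ z, 1 ≤ z → z ≤ l → 0 < cv z) (hcvia : ∀ z, 1 ≤ z → z < l → 0 < cvia z)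
    {u v : Vtx} (h : Adj l u v) : 0 < ecost ch cv cvia u v := by
  obtain ⟨hu₁, hul, hv₁, hvl, hd⟩ := h
  unfold ecost
  split_ifs
  · exact hch _ hu₁ hul
  · exact hcv _ hu₁ hul
  · exact hcvia _ (le_min hu₁ hv₁) (by simp only [Int.abs_eq_natAbs] at hd; omega)

theorem adj_comm {u v : Vtx} : Adj l u v ↔ Adj l v u := by
  simp only [Adj, abs_sub_comm u.1, abs_sub_comm u.2.1, abs_sub_comm u.2.2]
  tauto

theorem reflTransGen_adj_of_line (f : ℤ → Vtx) {m n : ℤ}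
    (hf : ∀ i, min m n ≤ i → i < max m n → Adj l (f i) (f (i + 1))) :
    ReflTransGen (Adj l) (f m) (f n) :=
  (reflTransGen_of_succ (fun i j => Adj l (f i) (f j))
    (fun i hi => hf i (min_le_of_left_le hi.1) (lt_max_of_lt_right hi.2))
    (fun i hi => adj_comm.1 (hf i (min_le_of_right_le hi.1) (lt_max_of_lt_left hi.2)))).lift
      f fun _ _ => id

theorem reflTransGen_adj {u v : Vtx} (hu : 1 ≤ u.2.2 ∧ u.2.2 ≤ l) (hv : 1 ≤ v.2.2 ∧ v.2.2 ≤ l) :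
    ReflTransGen (Adj l) u v := by
  obtain ⟨x, y, z⟩ := u
  obtain ⟨x', y', z'⟩ := v
  obtain ⟨⟨hz₁, hzl⟩, hz₁', hzl'⟩ : (1 ≤ z ∧ z ≤ l) ∧ 1 ≤ z' ∧ z' ≤ l := ⟨hu, hv⟩
  have horizontal : ReflTransGen (Adj l) (x, y, z) (x', y, z) :=
    reflTransGen_adj_of_line (fun i => (i, y, z)) fun i _ _ => by
      simp only [Adj, Int.abs_eq_natAbs]; omega
  have vertical : ReflTransGen (Adj l) (x', y, z) (x', y', z) :=
    reflTransGen_adj_of_line (fun i => (x', i, z)) fun i _ _ => by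
      simp only [Adj, Int.abs_eq_natAbs]; omega
  have vias : ReflTransGen (Adj l) (x', y', z) (x', y', z') :=
    reflTransGen_adj_of_line (fun i => (x', y', i)) fun i hi₁ hi₂ => by
      simp only [Adj, Int.abs_eq_natAbs]; omega
  exact horizontal.trans (vertical.trans vias)

theorem abs_clamp_sub_clamp_le (a b s t : ℤ) :
    |max a (min b s) - max a (min b t)| ≤ |s - t| := by
  simp only [Int.abs_eq_natAbs]; omega

def clampXY (x₀ x₁ y₀ y₁ : ℤ) (u : Vtx) : Vtx :=
  (max x₀ (min x₁ u.1), max y₀ (min y₁ u.2.1), u.2.2)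

theorem clampXY_eq_or_adj (ch cv cvia : ℤ → ℝ) (x₀ x₁ y₀ y₁ : ℤ) {u v : Vtx} (h : Adj l u v) :
    clampXY x₀ x₁ y₀ y₁ u = clampXY x₀ x₁ y₀ y₁ v ∨
      Adj l (clampXY x₀ x₁ y₀ y₁ u) (clampXY x₀ x₁ y₀ y₁ v) ∧
        ecost ch cv cvia (clampXY x₀ x₁ y₀ y₁ u) (clampXY x₀ x₁ y₀ y₁ v) =
          ecost ch cv cvia u v := by
  obtain ⟨x, y, z⟩ := u
  obtain ⟨x', y', z'⟩ := v
  have hx := abs_clamp_sub_clamp_le x₀ x₁ x x'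
  have hy := abs_clamp_sub_clamp_le y₀ y₁ y y'
  simp only [Adj, clampXY, Prod.mk.injEq] at h hx hy ⊢
  generalize max x₀ (min x₁ x) = X, max x₀ (min x₁ x') = X' at *
  generalize max y₀ (min y₁ y) = Y, max y₀ (min y₁ y') = Y' at *
  simp only [Int.abs_eq_natAbs] at h hx hy ⊢
  by_cases hcollapse : X = X' ∧ Y = Y' ∧ z = z'
  · exact Or.inl hcollapse
  -- the clamp is 1-Lipschitz, so an edge that does not collapse keeps its direction
  have hX : X ≠ X' ↔ x ≠ x' := by omega
  have hY : Y ≠ Y' ↔ y ≠ y' := by omega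
  exact Or.inr ⟨by omega, by simp only [ecost, hX, hY]⟩

end Grid

theorem stmt1_general (l : ℤ) (ch cv cvia : ℤ → ℝ)
    (hch : ∀ z, 1 ≤ z → z ≤ l → 0 < ch z)
    (hcv : ∀ z, 1 ≤ z → z ≤ l → 0 < cv z)
    (hcvia : ∀ z, 1 ≤ z → z < l → 0 < cvia z)
    (s : Vtx) (hs : 1 ≤ s.2.2 ∧ s.2.2 ≤ l)
    (ξm ξp υm υp ζ : ℤ) (hξ : ξm ≤ ξp) (hυ : υm ≤ υp) (hζ : 1 ≤ ζ ∧ ζ ≤ l) :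
    IsLeast
      { d : ℝ | ∃ v : Vtx,
          (ξm ≤ v.1 ∧ v.1 ≤ ξp ∧ υm ≤ v.2.1 ∧ v.2.1 ≤ υp ∧ v.2.2 = ζ) ∧
          gdistA (Adj l) (ecost ch cv cvia) s v = d }
      (gdistA (Adj l) (ecost ch cv cvia) s
        (max ξm (min ξp s.1), max υm (min υp s.2.1), ζ)) := by
  set r : Vtx := (max ξm (min ξp s.1), max υm (min υp s.2.1), ζ)
  refine ⟨⟨r, by simp only [r, and_true]; omega, rfl⟩, ?_⟩
  rintro _ ⟨v, ⟨hv₁, hv₂, hv₃, hv₄, rfl⟩, rfl⟩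
  set f := clampXY (min s.1 r.1) (max s.1 r.1) (min s.2.1 r.2.1) (max s.2.1 r.2.1)
  have hfs : f s = s := by simp only [f, clampXY]; ext <;> simp only <;> omega
  have hfv : f v = r := by simp only [f, clampXY, r]; ext <;> simp only <;> omega
  calc gdistA (Adj l) (ecost ch cv cvia) s r
      = gdistA (Adj l) (ecost ch cv cvia) (f s) (f v) := by rw [hfs, hfv]
    _ ≤ gdistA (Adj l) (ecost ch cv cvia) s v :=
      gdistA_map_le f (fun _ _ h => (ecost_pos_of_adj hch hcv hcvia h).le)
        (fun _ _ h => (clampXY_eq_or_adj ch cv cvia _ _ _ _ h).imp_right fun h => ⟨h.1, h.2.le⟩)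
        (exists_isWalkA_of_reflTransGen (reflTransGen_adj hs hζ))

/-- For a rectangle `R` on a single layer `ζ`, the minimum over `v ∈ R` of
`dist (s, v)` is attained at the vertex `r ∈ R` that is coordinatewise closest to `s`. -/
theorem stmt1 (l : ℤ) (hl : 1 ≤ l) (ch cv cvia : ℤ → ℝ)
    (hch : ∀ z, 1 ≤ z → z ≤ l → 0 < ch z)
    (hcv : ∀ z, 1 ≤ z → z ≤ l → 0 < cv z)
    (hcvia : ∀ z, 1 ≤ z → z < l → 0 < cvia z)
    (s : Vtx) (hs : 1 ≤ s.2.2 ∧ s.2.2 ≤ l)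
    (ξm ξp υm υp ζ : ℤ) (hξ : ξm ≤ ξp) (hυ : υm ≤ υp) (hζ : 1 ≤ ζ ∧ ζ ≤ l) :
    IsLeast
      { d : ℝ | ∃ v : Vtx,
          (ξm ≤ v.1 ∧ v.1 ≤ ξp ∧ υm ≤ v.2.1 ∧ v.2.1 ≤ υp ∧ v.2.2 = ζ) ∧
          gdistA (Adj l) (ecost ch cv cvia) s v = d }
      (gdistA (Adj l) (ecost ch cv cvia) s
        (max ξm (min ξp s.1), max υm (min υp s.2.1), ζ)) :=
  stmt1_general l ch cv cvia hch hcv hcvia s hs ξm ξp υm υp ζ hξ hυ hζ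
end

section
/- Let c be a simple-model cost function on the infinite grid graph G with l layers, and let s = (x_s, y_s, z_s) and r = (x_r, y_r, z_r) be vertices of G. Then dist_{(G,c)}(s, r) equals the minimum over all pairs of layers z^↔, z^↕ ∈ {1, …, l} of the smaller of the two values c_{z_s, z^↔} + c^↔_{z^↔}·|x_s − x_r| + c_{z^↔, z^↕} + c^↕_{z^↕}·|y_s − y_r| + c_{z^↕, z_r} and c_{z_s, z^↕} + c^↕_{z^↕}·|y_s − y_r| + c_{z^↕, z^↔} + c^↔_{z^↔}·|x_s − x_r| + c_{z^↔, z_r}. -/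
/-- `cviaSum cvia z z'` is the total cost of a stack of vias between layers `z` and `z'`,
i.e. `Σ_{ζ = min z z'}^{max z z' − 1} cvia ζ` (symmetric in `z` and `z'`). -/
noncomputable def cviaSum (cvia : ℤ → ℝ) (z z' : ℤ) : ℝ :=
  ∑ ζ ∈ Finset.Icc (min z z') (max z z' - 1), cvia ζ

open Finset

def walkCosts (A : Vtx → Vtx → Prop) (c : Vtx → Vtx → ℝ) (u v : Vtx) : Set ℝ :=
  {m | ∃ P, IsWalkA A P u v ∧ wcost c P = m}

section Walks

variable {A : Vtx → Vtx → Prop} {c : Vtx → Vtx → ℝ}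

theorem wcost_append (t : List Vtx) {v : Vtx} :
    ∀ {P : List Vtx}, P.getLast? = some v → wcost c (P ++ t) = wcost c P + wcost c (v :: t)
  | [], h => by simp at h
  | [a], h => by cases h; simp [wcost]
  | a :: b :: P, h => by
    rw [List.getLast?_cons_cons] at h
    simp only [List.cons_append, wcost]
    rw [← List.cons_append, wcost_append t h]
    ring

theorem zero_mem_walkCosts (u : Vtx) : (0 : ℝ) ∈ walkCosts A c u u :=
  ⟨[u], ⟨by simp, List.isChain_singleton u, rfl, rfl⟩, rfl⟩

theorem mem_walkCosts_of_adj {u v : Vtx} (h : A u v) : c u v ∈ walkCosts A c u v :=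
  ⟨[u, v], ⟨by simp, List.isChain_pair.2 h, rfl, rfl⟩, by simp [wcost]⟩

theorem add_mem_walkCosts {u v w : Vtx} {a b : ℝ} (ha : a ∈ walkCosts A c u v)
    (hb : b ∈ walkCosts A c v w) : a + b ∈ walkCosts A c u w := by
  obtain ⟨P, ⟨hP, hPA, hPu, hPv⟩, rfl⟩ := ha
  obtain ⟨_ | ⟨v', t⟩, ⟨hQ, hQA, hQv, hQw⟩, rfl⟩ := hb
  · exact absurd rfl hQ
  cases hQv
  refine ⟨P ++ t, ⟨by simp [hP], ?_, by simp [List.head?_append, hPu], ?_⟩,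
    wcost_append t hPv⟩
  · refine List.isChain_append.2 ⟨hPA, hQA.tail, fun x hx y hy => ?_⟩
    rw [hPv, Option.mem_some_iff] at hx
    subst hx
    cases t with
    | nil => simp at hy
    | cons y' t => cases hy; exact (List.isChain_cons_cons.1 hQA).1
  · cases t with
    | nil => cases hQw; simpa using hPv
    | cons y t => simpa [List.getLast?_append] using hQw

theorem sum_mem_walkCosts_of_le (f : ℤ → Vtx) (w : ℤ → ℝ) {a b : ℤ} (hab : a ≤ b)
    (hf : ∀ i ∈ Ico a b, A (f i) (f (i + 1)) ∧ c (f i) (f (i + 1)) = w i) :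
    ∑ i ∈ Ico a b, w i ∈ walkCosts A c (f a) (f b) := by
  induction b, hab using Int.leInduction with
  | base => simpa using zero_mem_walkCosts (f a)
  | succ b hab ih =>
    have hb : b ∈ Ico a (b + 1) := by simp [hab]
    rw [← insert_Ico_right_eq_Ico_add_one hab, sum_insert (by simp), add_comm (w b),
      ← (hf b hb).2]
    exact add_mem_walkCosts (ih fun i hi => hf i (Ico_subset_Ico_right (by omega) hi))
      (mem_walkCosts_of_adj (hf b hb).1)

theorem sum_mem_walkCosts_of_ge (f : ℤ → Vtx) (w : ℤ → ℝ) {a b : ℤ} (hab : a ≤ b)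
    (hf : ∀ i ∈ Ico a b, A (f (i + 1)) (f i) ∧ c (f (i + 1)) (f i) = w i) :
    ∑ i ∈ Ico a b, w i ∈ walkCosts A c (f b) (f a) := by
  induction b, hab using Int.leInduction with
  | base => simpa using zero_mem_walkCosts (f a)
  | succ b hab ih =>
    have hb : b ∈ Ico a (b + 1) := by simp [hab]
    rw [← insert_Ico_right_eq_Ico_add_one hab, sum_insert (by simp), ← (hf b hb).2]
    exact add_mem_walkCosts (mem_walkCosts_of_adj (hf b hb).1)
      (ih fun i hi => hf i (Ico_subset_Ico_right (by omega) hi))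

theorem sum_mem_walkCosts_Ico_min_max (f : ℤ → Vtx) (w : ℤ → ℝ) (a b : ℤ)
    (hf : ∀ i ∈ Ico (min a b) (max a b), A (f i) (f (i + 1)) ∧ A (f (i + 1)) (f i) ∧
      c (f i) (f (i + 1)) = w i ∧ c (f (i + 1)) (f i) = w i) :
    ∑ i ∈ Ico (min a b) (max a b), w i ∈ walkCosts A c (f a) (f b) := by
  rcases le_total a b with hab | hab
  · rw [min_eq_left hab, max_eq_right hab] at hf ⊢
    exact sum_mem_walkCosts_of_le f w hab fun i hi => ⟨(hf i hi).1, (hf i hi).2.2.1⟩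
  · rw [min_eq_right hab, max_eq_left hab] at hf ⊢
    exact sum_mem_walkCosts_of_ge f w hab fun i hi => ⟨(hf i hi).2.1, (hf i hi).2.2.2⟩

end Walks

section ViaCost

variable {cvia : ℤ → ℝ}

theorem cviaSum_eq_sum_Ico (z z' : ℤ) :
    cviaSum cvia z z' = ∑ ζ ∈ Ico (min z z') (max z z'), cvia ζ := by
  rw [cviaSum, Icc_sub_one_right_eq_Ico]

@[simp]
theorem cviaSum_self (z : ℤ) : cviaSum cvia z z = 0 := by
  simp [cviaSum_eq_sum_Ico]

theorem cviaSum_of_abs_sub_eq_one {z z' : ℤ} (h : |z - z'| = 1) :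
    cviaSum cvia z z' = cvia (min z z') := by
  have hmax : max z z' = min z z' + 1 := by
    rcases abs_eq zero_le_one |>.1 h with h | h <;> omega
  rw [cviaSum_eq_sum_Ico, hmax, Ico_add_one_right_eq_Icc, Icc_self, sum_singleton]

theorem cviaSum_triangle {l a b c : ℤ} (hcvia : ∀ z, 1 ≤ z → z < l → 0 ≤ cvia z)
    (ha : a ∈ Set.Icc 1 l) (hb : b ∈ Set.Icc 1 l) (hc : c ∈ Set.Icc 1 l) :
    cviaSum cvia a c ≤ cviaSum cvia a b + cviaSum cvia b c := by
  obtain ⟨ha1, ha2⟩ := ha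
  obtain ⟨hb1, hb2⟩ := hb
  obtain ⟨hc1, hc2⟩ := hc
  simp only [cviaSum_eq_sum_Ico]
  have hnonneg : ∀ i ∈ Ico (min a b) (max a b) ∪ Ico (min b c) (max b c), 0 ≤ cvia i := by
    intro i hi
    simp only [mem_union, mem_Ico] at hi
    exact hcvia i (by omega) (by omega)
  calc ∑ i ∈ Ico (min a c) (max a c), cvia i
      ≤ ∑ i ∈ Ico (min a b) (max a b) ∪ Ico (min b c) (max b c), cvia i := by
        refine sum_le_sum_of_subset_of_nonneg ?_ fun i hi _ => hnonneg i hi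
        intro i hi
        simp only [mem_union, mem_Ico] at hi ⊢
        omega
    _ ≤ _ := by
        rw [← sum_union_inter]
        exact le_add_of_nonneg_right
          (sum_nonneg fun i hi => hnonneg i (mem_union_left _ (mem_inter.1 hi).1))

end ViaCost

theorem sum_Ico_min_max_const (a b : ℤ) (k : ℝ) :
    ∑ _i ∈ Ico (min a b) (max a b), k = k * |(a : ℝ) - b| := by
  have hcard : (((max a b - min a b).toNat : ℕ) : ℝ) = |(a : ℝ) - b| := by
    rw [← Int.cast_natCast, Int.toNat_of_nonneg (by omega), max_sub_min_eq_abs']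
    push_cast
    rfl
  rw [sum_const, Int.card_Ico, nsmul_eq_mul, hcard, mul_comm]

section Segments

variable {l : ℤ} (ch cv cvia : ℤ → ℝ)

theorem mem_walkCosts_horizontal (x x' y : ℤ) {z : ℤ} (hz : z ∈ Set.Icc 1 l) :
    ch z * |(x : ℝ) - x'| ∈ walkCosts (Adj l) (ecost ch cv cvia) (x, y, z) (x', y, z) := by
  rw [← sum_Ico_min_max_const]
  exact sum_mem_walkCosts_Ico_min_max (fun i => (i, y, z)) _ x x' fun i _ => by
    simp [Adj, ecost, hz.1, hz.2]

theorem mem_walkCosts_vertical (x y y' : ℤ) {z : ℤ} (hz : z ∈ Set.Icc 1 l) :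
    cv z * |(y : ℝ) - y'| ∈ walkCosts (Adj l) (ecost ch cv cvia) (x, y, z) (x, y', z) := by
  rw [← sum_Ico_min_max_const]
  exact sum_mem_walkCosts_Ico_min_max (fun i => (x, i, z)) _ y y' fun i _ => by
    simp [Adj, ecost, hz.1, hz.2]

theorem mem_walkCosts_via (x y : ℤ) {z z' : ℤ} (hz : z ∈ Set.Icc 1 l)
    (hz' : z' ∈ Set.Icc 1 l) :
    cviaSum cvia z z' ∈ walkCosts (Adj l) (ecost ch cv cvia) (x, y, z) (x, y, z') := by
  obtain ⟨hz1, hz2⟩ := hz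
  obtain ⟨hz1', hz2'⟩ := hz'
  rw [cviaSum_eq_sum_Ico]
  exact sum_mem_walkCosts_Ico_min_max (fun i => (x, y, i)) _ z z' fun i hi => by
    simp only [mem_Ico] at hi
    simp [Adj, ecost]
    omega

end Segments

noncomputable def hvCost (ch cv cvia : ℤ → ℝ) (z zr : ℤ) (X Y : ℝ) (zh zv : ℤ) : ℝ :=
  cviaSum cvia z zh + ch zh * X + cviaSum cvia zh zv + cv zv * Y + cviaSum cvia zv zr

/- The second argument of `min` is the route that runs its vertical segment first. -/
noncomputable def routeCost (ch cv cvia : ℤ → ℝ) (z zr : ℤ) (X Y : ℝ) (zh zv : ℤ) : ℝ :=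
  min (hvCost ch cv cvia z zr X Y zh zv) (hvCost cv ch cvia z zr Y X zv zh)

noncomputable def routeCosts (l : ℤ) (ch cv cvia : ℤ → ℝ) (u r : Vtx) : Set ℝ :=
  { m | ∃ zh zv : ℤ, 1 ≤ zh ∧ zh ≤ l ∧ 1 ≤ zv ∧ zv ≤ l ∧
      m = routeCost ch cv cvia u.2.2 r.2.2 |(u.1 : ℝ) - r.1| |(u.2.1 : ℝ) - r.2.1| zh zv }

section RouteCost

variable {l : ℤ} {ch cv cvia : ℤ → ℝ}

theorem routeCost_swap (z zr : ℤ) (X Y : ℝ) (zh zv : ℤ) :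
    routeCost cv ch cvia z zr Y X zv zh = routeCost ch cv cvia z zr X Y zh zv :=
  min_comm _ _

@[simp]
theorem routeCost_self (z : ℤ) : routeCost ch cv cvia z z 0 0 z z = 0 := by
  simp [routeCost, hvCost]

theorem routeCost_le_cviaSum_add (hcvia : ∀ z, 1 ≤ z → z < l → 0 ≤ cvia z)
    {z z' zr zh zv : ℤ} (hz : z ∈ Set.Icc 1 l) (hz' : z' ∈ Set.Icc 1 l)
    (hzh : zh ∈ Set.Icc 1 l) (hzv : zv ∈ Set.Icc 1 l) (X Y : ℝ) :
    routeCost ch cv cvia z zr X Y zh zv ≤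
      cviaSum cvia z z' + routeCost ch cv cvia z' zr X Y zh zv := by
  have th := cviaSum_triangle hcvia hz hz' hzh
  have tv := cviaSum_triangle hcvia hz hz' hzv
  rw [routeCost, routeCost, ← min_add_add_left]
  exact min_le_min (by simp only [hvCost]; linarith) (by simp only [hvCost]; linarith)

/- Either keep the layers, or, if `ch z < ch zh`, run the horizontal segment on the current
layer `z` instead of `zh`. -/
theorem exists_routeCost_le_add (hcvia : ∀ z, 1 ≤ z → z < l → 0 ≤ cvia z)
    {z zr zh zv : ℤ} (hz : z ∈ Set.Icc 1 l) (hzr : zr ∈ Set.Icc 1 l)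
    (hzh : zh ∈ Set.Icc 1 l) (hzv : zv ∈ Set.Icc 1 l) (hchz : 0 ≤ ch z) (hchzh : 0 ≤ ch zh)
    {X X' : ℝ} (Y : ℝ) (hX' : 0 ≤ X') (hX : X ≤ X' + 1) :
    ∃ zh' zv', 1 ≤ zh' ∧ zh' ≤ l ∧ 1 ≤ zv' ∧ zv' ≤ l ∧
      routeCost ch cv cvia z zr X Y zh' zv' ≤ ch z + routeCost ch cv cvia z zr X' Y zh zv := by
  rcases le_total (ch zh) (ch z) with hle | hle
  · refine ⟨zh, zv, hzh.1, hzh.2, hzv.1, hzv.2, ?_⟩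
    have hstep : ch zh * X ≤ ch z + ch zh * X' := by nlinarith
    rw [routeCost, routeCost, ← min_add_add_left]
    exact min_le_min (by simp only [hvCost]; linarith) (by simp only [hvCost]; linarith)
  · refine ⟨z, zv, hz.1, hz.2, hzv.1, hzv.2, ?_⟩
    have hstep : ch z * X ≤ ch z + ch zh * X' := by nlinarith
    have th := cviaSum_triangle hcvia hz hzh hzv
    have tv := cviaSum_triangle hcvia hzv hzh hzr
    rw [routeCost, routeCost, ← min_add_add_left]
    refine (min_le_left _ _).trans (le_min ?_ ?_) <;> simp only [hvCost, cviaSum_self] <;>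
      linarith

end RouteCost

section Routes

variable {l : ℤ} {ch cv cvia : ℤ → ℝ}

theorem routeCost_mem_walkCosts {s r : Vtx} (hs : s.2.2 ∈ Set.Icc 1 l)
    (hr : r.2.2 ∈ Set.Icc 1 l) {zh zv : ℤ} (hzh : zh ∈ Set.Icc 1 l) (hzv : zv ∈ Set.Icc 1 l) :
    routeCost ch cv cvia s.2.2 r.2.2 |(s.1 : ℝ) - r.1| |(s.2.1 : ℝ) - r.2.1| zh zv ∈
      walkCosts (Adj l) (ecost ch cv cvia) s r := by
  obtain ⟨xs, ys, zs⟩ := s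
  obtain ⟨xr, yr, zr⟩ := r
  rcases min_choice (hvCost ch cv cvia zs zr |(xs : ℝ) - xr| |(ys : ℝ) - yr| zh zv)
    (hvCost cv ch cvia zs zr |(ys : ℝ) - yr| |(xs : ℝ) - xr| zv zh) with h | h <;>
    rw [routeCost, h, hvCost]
  · exact add_mem_walkCosts (add_mem_walkCosts (add_mem_walkCosts (add_mem_walkCosts
      (mem_walkCosts_via ch cv cvia xs ys hs hzh)
      (mem_walkCosts_horizontal ch cv cvia xs xr ys hzh))
      (mem_walkCosts_via ch cv cvia xr ys hzh hzv))
      (mem_walkCosts_vertical ch cv cvia xr ys yr hzv))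
      (mem_walkCosts_via ch cv cvia xr yr hzv hr)
  · exact add_mem_walkCosts (add_mem_walkCosts (add_mem_walkCosts (add_mem_walkCosts
      (mem_walkCosts_via ch cv cvia xs ys hs hzv)
      (mem_walkCosts_vertical ch cv cvia xs ys yr hzv))
      (mem_walkCosts_via ch cv cvia xs yr hzv hzh))
      (mem_walkCosts_horizontal ch cv cvia xs xr yr hzh))
      (mem_walkCosts_via ch cv cvia xr yr hzh hr)

theorem routeCosts_subset_walkCosts {s r : Vtx} (hs : s.2.2 ∈ Set.Icc 1 l)
    (hr : r.2.2 ∈ Set.Icc 1 l) :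
    routeCosts l ch cv cvia s r ⊆ walkCosts (Adj l) (ecost ch cv cvia) s r := by
  rintro _ ⟨zh, zv, h1, h2, h3, h4, rfl⟩
  exact routeCost_mem_walkCosts hs hr ⟨h1, h2⟩ ⟨h3, h4⟩

theorem exists_isLeast_routeCosts (hl : 1 ≤ l) (u r : Vtx) :
    ∃ m, IsLeast (routeCosts l ch cv cvia u r) m := by
  obtain ⟨⟨zh, zv⟩, ⟨⟨h1, h2⟩, h3, h4⟩, hmin⟩ :=
    Set.exists_min_image (Set.Icc 1 l ×ˢ Set.Icc 1 l)
    (fun p => routeCost ch cv cvia u.2.2 r.2.2 |(u.1 : ℝ) - r.1| |(u.2.1 : ℝ) - r.2.1| p.1 p.2)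
    ((Set.finite_Icc 1 l).prod (Set.finite_Icc 1 l)) ⟨(1, 1), ⟨le_rfl, hl⟩, le_rfl, hl⟩
  refine ⟨_, ⟨zh, zv, h1, h2, h3, h4, rfl⟩, ?_⟩
  rintro _ ⟨zh', zv', h1', h2', h3', h4', rfl⟩
  exact hmin (zh', zv') ⟨⟨h1', h2'⟩, h3', h4'⟩

end Routes

theorem Adj.unit_step {l xu yu zu xv yv zv : ℤ} (h : Adj l (xu, yu, zu) (xv, yv, zv)) :
    zu ∈ Set.Icc 1 l ∧ zv ∈ Set.Icc 1 l ∧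
      (|xu - xv| = 1 ∧ yu = yv ∧ zu = zv ∨ xu = xv ∧ |yu - yv| = 1 ∧ zu = zv ∨
        xu = xv ∧ yu = yv ∧ |zu - zv| = 1) := by
  obtain ⟨h1, h2, h3, h4, h⟩ := h
  refine ⟨⟨h1, h2⟩, ⟨h3, h4⟩, ?_⟩
  simp only [Int.abs_eq_natAbs] at h ⊢
  omega

theorem abs_sub_le_abs_sub_add_one {a b : ℤ} (h : |a - b| = 1) (c : ℝ) :
    |(a : ℝ) - c| ≤ |(b : ℝ) - c| + 1 := by
  have hab : |(a : ℝ) - b| = 1 := by exact_mod_cast h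
  linarith [abs_sub_le (a : ℝ) b c]

theorem exists_le_wcost_of_potential {A : Vtx → Vtx → Prop} {c : Vtx → Vtx → ℝ}
    {R : Vtx → Set ℝ} {r : Vtx} (hr : ∃ m ∈ R r, m ≤ 0)
    (hstep : ∀ u v, A u v → ∀ m' ∈ R v, ∃ m ∈ R u, m ≤ c u v + m') :
    ∀ {P : List Vtx} {u : Vtx}, P.IsChain A → P.head? = some u → P.getLast? = some r →
      ∃ m ∈ R u, m ≤ wcost c P
  | [], _, _, hu, _ => by simp at hu
  | [a], _, _, hu, har => by
    cases hu
    cases har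
    simpa [wcost] using hr
  | a :: b :: P, _, hP, hu, hPr => by
    cases hu
    rw [List.isChain_cons_cons] at hP
    rw [List.getLast?_cons_cons] at hPr
    obtain ⟨m', hm', hm'P⟩ := exists_le_wcost_of_potential hr hstep hP.2 rfl hPr
    obtain ⟨m, hm, hmm'⟩ := hstep a b hP.1 m' hm'
    exact ⟨m, hm, by simp only [wcost]; linarith⟩

section LowerBound

variable {l : ℤ} {ch cv cvia : ℤ → ℝ}
  (hch : ∀ z, 1 ≤ z → z ≤ l → 0 ≤ ch z) (hcv : ∀ z, 1 ≤ z → z ≤ l → 0 ≤ cv z)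
  (hcvia : ∀ z, 1 ≤ z → z < l → 0 ≤ cvia z) {r : Vtx} (hr : r.2.2 ∈ Set.Icc 1 l)
include hch hcv hcvia hr

theorem exists_mem_routeCosts_le_ecost_add {u v : Vtx} (huv : Adj l u v) {m' : ℝ}
    (hm' : m' ∈ routeCosts l ch cv cvia v r) :
    ∃ m ∈ routeCosts l ch cv cvia u r, m ≤ ecost ch cv cvia u v + m' := by
  obtain ⟨xu, yu, zu⟩ := u
  obtain ⟨xv, yv, zv⟩ := v
  obtain ⟨zh, zv', h1, h2, h3, h4, rfl⟩ := hm'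
  obtain ⟨hzu, hzv, ⟨hx, rfl, rfl⟩ | ⟨rfl, hy, rfl⟩ | ⟨rfl, rfl, hz⟩⟩ := Adj.unit_step huv
  · obtain ⟨zh', zv'', h1', h2', h3', h4', hle⟩ :=
      exists_routeCost_le_add (cv := cv) hcvia hzu hr ⟨h1, h2⟩ ⟨h3, h4⟩ (hch zu hzu.1 hzu.2)
        (hch zh h1 h2) |(yu : ℝ) - r.2.1| (abs_nonneg _) (abs_sub_le_abs_sub_add_one hx r.1)
    refine ⟨_, ⟨zh', zv'', h1', h2', h3', h4', rfl⟩, ?_⟩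
    have hne : xu ≠ xv := by rintro rfl; simp at hx
    simpa [ecost, hne] using hle
  · obtain ⟨zv'', zh', h1', h2', h3', h4', hle⟩ :=
      exists_routeCost_le_add (cv := ch) hcvia hzu hr ⟨h3, h4⟩ ⟨h1, h2⟩ (hcv zu hzu.1 hzu.2)
        (hcv zv' h3 h4) |(xu : ℝ) - r.1| (abs_nonneg _) (abs_sub_le_abs_sub_add_one hy r.2.1)
    refine ⟨_, ⟨zh', zv'', h3', h4', h1', h2', rfl⟩, ?_⟩
    have hne : yu ≠ yv := by rintro rfl; simp at hy
    simpa [ecost, hne, routeCost_swap] using hle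
  · refine ⟨_, ⟨zh, zv', h1, h2, h3, h4, rfl⟩, ?_⟩
    rw [ecost, if_neg (by simp), if_neg (by simp),
      ← cviaSum_of_abs_sub_eq_one (cvia := cvia) hz]
    exact routeCost_le_cviaSum_add hcvia hzu hzv ⟨h1, h2⟩ ⟨h3, h4⟩ _ _

theorem exists_mem_routeCosts_le_of_mem_walkCosts {u : Vtx} {w : ℝ}
    (hw : w ∈ walkCosts (Adj l) (ecost ch cv cvia) u r) :
    ∃ m ∈ routeCosts l ch cv cvia u r, m ≤ w := by
  obtain ⟨P, ⟨-, hP, hPu, hPr⟩, rfl⟩ := hw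
  refine exists_le_wcost_of_potential (A := Adj l) (c := ecost ch cv cvia) ?_
    (fun _ _ huv _ hm' => exists_mem_routeCosts_le_ecost_add hch hcv hcvia hr huv hm')
    hP hPu hPr
  exact ⟨0, ⟨r.2.2, r.2.2, hr.1, hr.2, hr.1, hr.2, by simp⟩, le_rfl⟩

end LowerBound

theorem isLeast_of_subset_of_forall_exists_le {α : Type*} [Preorder α] {s t : Set α} {a : α}
    (ha : IsLeast s a) (hst : s ⊆ t) (h : ∀ b ∈ t, ∃ c ∈ s, c ≤ b) : IsLeast t a :=
  ⟨hst ha.1, fun b hb => let ⟨_, hc, hcb⟩ := h b hb; (ha.2 hc).trans hcb⟩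

theorem stmt2_general (l : ℤ) (ch cv cvia : ℤ → ℝ)
    (hch : ∀ z, 1 ≤ z → z ≤ l → 0 < ch z)
    (hcv : ∀ z, 1 ≤ z → z ≤ l → 0 < cv z)
    (hcvia : ∀ z, 1 ≤ z → z < l → 0 < cvia z)
    (s r : Vtx) (hs : 1 ≤ s.2.2 ∧ s.2.2 ≤ l) (hr : 1 ≤ r.2.2 ∧ r.2.2 ≤ l) :
    IsLeast
      { m : ℝ | ∃ zh zv : ℤ, 1 ≤ zh ∧ zh ≤ l ∧ 1 ≤ zv ∧ zv ≤ l ∧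
          m = min
            (cviaSum cvia s.2.2 zh + ch zh * |(s.1 : ℝ) - (r.1 : ℝ)| +
              cviaSum cvia zh zv + cv zv * |(s.2.1 : ℝ) - (r.2.1 : ℝ)| +
              cviaSum cvia zv r.2.2)
            (cviaSum cvia s.2.2 zv + cv zv * |(s.2.1 : ℝ) - (r.2.1 : ℝ)| +
              cviaSum cvia zv zh + ch zh * |(s.1 : ℝ) - (r.1 : ℝ)| +
              cviaSum cvia zh r.2.2) }
      (gdistA (Adj l) (ecost ch cv cvia) s r) := by
  obtain ⟨m, hm⟩ := exists_isLeast_routeCosts (ch := ch) (cv := cv) (cvia := cvia)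
    (hs.1.trans hs.2) s r
  have hdist : IsLeast (walkCosts (Adj l) (ecost ch cv cvia) s r) m :=
    isLeast_of_subset_of_forall_exists_le hm (routeCosts_subset_walkCosts hs hr) fun _ hw =>
      exists_mem_routeCosts_le_of_mem_walkCosts (fun z h1 h2 => (hch z h1 h2).le)
        (fun z h1 h2 => (hcv z h1 h2).le) (fun z h1 h2 => (hcvia z h1 h2).le) hr hw
  rw [gdistA, ← walkCosts, hdist.csInf_eq]
  exact hm

/-- `dist (s, r)` equals the minimum, over all pairs of layers
`z↔, z↕ ∈ {1, …, l}`, of the smaller of the two values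
`c_{z_s,z↔} + c↔_{z↔}·|x_s − x_r| + c_{z↔,z↕} + c↕_{z↕}·|y_s − y_r| + c_{z↕,z_r}` and
`c_{z_s,z↕} + c↕_{z↕}·|y_s − y_r| + c_{z↕,z↔} + c↔_{z↔}·|x_s − x_r| + c_{z↔,z_r}`. -/
theorem stmt2 (l : ℤ) (hl : 1 ≤ l) (ch cv cvia : ℤ → ℝ)
    (hch : ∀ z, 1 ≤ z → z ≤ l → 0 < ch z)
    (hcv : ∀ z, 1 ≤ z → z ≤ l → 0 < cv z)
    (hcvia : ∀ z, 1 ≤ z → z < l → 0 < cvia z)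
    (s r : Vtx) (hs : 1 ≤ s.2.2 ∧ s.2.2 ≤ l) (hr : 1 ≤ r.2.2 ∧ r.2.2 ≤ l) :
    IsLeast
      { m : ℝ | ∃ zh zv : ℤ, 1 ≤ zh ∧ zh ≤ l ∧ 1 ≤ zv ∧ zv ≤ l ∧
          m = min
            (cviaSum cvia s.2.2 zh + ch zh * |(s.1 : ℝ) - (r.1 : ℝ)| +
              cviaSum cvia zh zv + cv zv * |(s.2.1 : ℝ) - (r.2.1 : ℝ)| +
              cviaSum cvia zv r.2.2)
            (cviaSum cvia s.2.2 zv + cv zv * |(s.2.1 : ℝ) - (r.2.1 : ℝ)| +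
              cviaSum cvia zv zh + ch zh * |(s.1 : ℝ) - (r.1 : ℝ)| +
              cviaSum cvia zh r.2.2) }
      (gdistA (Adj l) (ecost ch cv cvia) s r) :=
  stmt2_general l ch cv cvia hch hcv hcvia s r hs hr
end

section
/- Let x⁻ < x⁺ be real numbers. For a finite set F of affine functions ℝ → ℝ and g ∈ F, let I_F(g) := {x ∈ [x⁻, x⁺] : g(x) = min_{f ∈ F} f(x)}, call g non-dominated in F if I_F(g) contains more than one point, and in that case define key_F(g) := min_{x ∈ I_F(g)} g(x). Let F be a finite set of affine functions all of which are non-dominated in F, let g be a further affine function, and let F' := F ∪ {g}. Then: (i) key_{F'}(f) ≥ key_F(f) for every f ∈ F that is non-dominated in F', and (ii) there is at most one f ∈ F that is non-dominated in F' with key_{F'}(f) > key_F(f). -/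
/-- Affine functions `ℝ → ℝ` are represented by pairs `(a, b)`, i.e. `x ↦ a·x + b`. -/
def aeval (f : ℝ × ℝ) (x : ℝ) : ℝ := f.1 * x + f.2

/-- `Idom xm xp F g` is the set `I_F(g)` of points of `[x⁻, x⁺]` at which `g` attains the
pointwise minimum of `F`. -/
def Idom (xm xp : ℝ) (F : Finset (ℝ × ℝ)) (g : ℝ × ℝ) : Set ℝ :=
  { x | x ∈ Set.Icc xm xp ∧ ∀ f ∈ F, aeval g x ≤ aeval f x }

/-- `g` is non-dominated in `F` if `I_F(g)` contains more than one point. -/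
def NonDom (xm xp : ℝ) (F : Finset (ℝ × ℝ)) (g : ℝ × ℝ) : Prop :=
  ∃ x ∈ Idom xm xp F g, ∃ y ∈ Idom xm xp F g, x ≠ y

/-- `key_F(g)`, the minimum value of `g` on `I_F(g)`. -/
noncomputable def keyF (xm xp : ℝ) (F : Finset (ℝ × ℝ)) (g : ℝ × ℝ) : ℝ :=
  sInf (aeval g '' Idom xm xp F g)

/-!
If `key_{F'}(f) > key_F(f)`, then `g` lies strictly below `f` at a minimiser `x` of `f` on
`I_F(f)`, but not at some point `y` of `I_{F'}(f) ⊆ I_F(f)`, and `f(x) < f(y)`. The set where `g`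
lies strictly below every member of `F` is an interval containing `x` and missing `y`, so `I_F(f)`
leaves it on the side of `y`. Two such functions leaving on the same side have intervals `I_F`
sharing more than one point, hence coincide. On opposite sides, the one on the left decreases and
the one on the right increases, which is impossible: the slopes of the lower envelope of `F`
decrease from left to right.
-/

open Set

def undercut (F : Finset (ℝ × ℝ)) (g : ℝ × ℝ) : Set ℝ :=
  {x | ∀ f ∈ F, aeval g x < aeval f x}

section Affine

variable {f f₁ f₂ : ℝ × ℝ} {p q r : ℝ}

lemma aeval_sub (f g : ℝ × ℝ) (x : ℝ) : aeval (f - g) x = aeval f x - aeval g x := by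
  simp only [aeval, Prod.fst_sub, Prod.snd_sub]
  ring

lemma continuous_aeval (f : ℝ × ℝ) : Continuous (aeval f) := by
  unfold aeval
  fun_prop

lemma aeval_le_max (f : ℝ × ℝ) (hr : r ∈ Icc p q) :
    aeval f r ≤ max (aeval f p) (aeval f q) := by
  obtain ⟨hpr, hrq⟩ := hr
  rcases le_total 0 f.1 with h | h
  · exact le_max_of_le_right (by unfold aeval; nlinarith)
  · exact le_max_of_le_left (by unfold aeval; nlinarith)

lemma eq_of_aeval_eq_of_ne (hpq : p ≠ q) (hp : aeval f₁ p = aeval f₂ p)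
    (hq : aeval f₁ q = aeval f₂ q) : f₁ = f₂ := by
  have hslope : f₁.1 = f₂.1 := by
    have h : (f₁.1 - f₂.1) * (p - q) = 0 := by unfold aeval at hp hq; linarith
    simpa [sub_eq_zero, hpq] using h
  refine Prod.ext hslope ?_
  unfold aeval at hp
  rw [hslope] at hp
  linarith

lemma fst_pos_of_aeval_lt_aeval (hpq : p < q) (h : aeval f p < aeval f q) : 0 < f.1 := by
  unfold aeval at h
  nlinarith

lemma fst_neg_of_aeval_lt_aeval (hqp : q < p) (h : aeval f p < aeval f q) : f.1 < 0 := by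
  unfold aeval at h
  nlinarith

lemma fst_le_fst_of_aeval_le_of_aeval_le (hpq : p < q) (hp : aeval f₁ p ≤ aeval f₂ p)
    (hq : aeval f₂ q ≤ aeval f₁ q) : f₂.1 ≤ f₁.1 := by
  unfold aeval at hp hq
  nlinarith

end Affine

theorem Set.OrdConnected.inter_nontrivial_of_lt {α : Type*} [LinearOrder α] {S I₁ I₂ : Set α}
    (hS : S.OrdConnected) (hI₁ : I₁.OrdConnected) (hI₂ : I₂.OrdConnected) {x₁ y₁ x₂ y₂ : α}
    (hx₁ : x₁ ∈ I₁ ∩ S) (hy₁ : y₁ ∈ I₁ \ S) (hx₂ : x₂ ∈ I₂ ∩ S) (hy₂ : y₂ ∈ I₂ \ S)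
    (hxy₁ : x₁ < y₁) (hxy₂ : x₂ < y₂) : (I₁ ∩ I₂).Nontrivial := by
  wlog hx : x₁ ≤ x₂ generalizing I₁ I₂ x₁ y₁ x₂ y₂
  · rw [inter_comm]
    exact this hI₂ hI₁ hx₂ hy₂ hx₁ hy₁ hxy₂ hxy₁ (le_of_not_ge hx)
  have hxy : x₂ < y₁ := lt_of_not_ge fun h => hy₁.2 (hS.out hx₁.2 hx₂.2 ⟨hxy₁.le, h⟩)
  refine ⟨x₂, ⟨hI₁.out hx₁.1 hy₁.1 ⟨hx, hxy.le⟩, hx₂.1⟩, min y₁ y₂,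
    ⟨hI₁.out hx₁.1 hy₁.1 ⟨?_, min_le_left _ _⟩, hI₂.out hx₂.1 hy₂.1 ⟨?_, min_le_right _ _⟩⟩,
    (lt_min hxy hxy₂).ne⟩
  · exact hx.trans (le_min hxy.le hxy₂.le)
  · exact le_min hxy.le hxy₂.le

section Envelope

variable {xm xp : ℝ} {F : Finset (ℝ × ℝ)} {f g f₁ f₂ : ℝ × ℝ}

lemma ordConnected_undercut (F : Finset (ℝ × ℝ)) (g : ℝ × ℝ) : (undercut F g).OrdConnected :=
  ⟨fun p hp q hq r hr f hf => by
    have key : aeval (g - f) r < 0 := (aeval_le_max (g - f) hr).trans_lt <|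
      max_lt (by rw [aeval_sub]; linarith [hp f hf]) (by rw [aeval_sub]; linarith [hq f hf])
    rw [aeval_sub] at key
    linarith⟩

lemma ordConnected_Idom (xm xp : ℝ) (F : Finset (ℝ × ℝ)) (f : ℝ × ℝ) :
    (Idom xm xp F f).OrdConnected :=
  ⟨fun p hp q hq r hr => ⟨⟨hp.1.1.trans hr.1, hr.2.trans hq.1.2⟩, fun f' hf' => by
    have key : aeval (f - f') r ≤ 0 := (aeval_le_max (f - f') hr).trans <|
      max_le (by rw [aeval_sub]; linarith [hp.2 f' hf']) (by rw [aeval_sub]; linarith [hq.2 f' hf'])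
    rw [aeval_sub] at key
    linarith⟩⟩

lemma isCompact_Idom (xm xp : ℝ) (F : Finset (ℝ × ℝ)) (f : ℝ × ℝ) :
    IsCompact (Idom xm xp F f) := by
  have hclosed : IsClosed (Idom xm xp F f) := by
    have : Idom xm xp F f = Icc xm xp ∩ ⋂ f' ∈ F, {x | aeval f x ≤ aeval f' x} := by
      ext x
      simp [Idom]
    rw [this]
    exact isClosed_Icc.inter (isClosed_biInter fun f' _ =>
      isClosed_le (continuous_aeval f) (continuous_aeval f'))
  exact isCompact_Icc.of_isClosed_subset hclosed fun x hx => hx.1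

lemma isCompact_image_Idom (xm xp : ℝ) (F : Finset (ℝ × ℝ)) (f : ℝ × ℝ) :
    IsCompact (aeval f '' Idom xm xp F f) :=
  (isCompact_Idom xm xp F f).image (continuous_aeval f)

lemma keyF_le_aeval {x : ℝ} (hx : x ∈ Idom xm xp F f) : keyF xm xp F f ≤ aeval f x :=
  csInf_le (isCompact_image_Idom xm xp F f).bddBelow (mem_image_of_mem _ hx)

lemma mem_Idom_insert {x : ℝ} :
    x ∈ Idom xm xp (insert g F) f ↔ x ∈ Idom xm xp F f ∧ aeval f x ≤ aeval g x := by
  simp only [Idom, mem_ofPred_eq, Finset.forall_mem_insert]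
  tauto

lemma NonDom.nonempty (h : NonDom xm xp F f) : (Idom xm xp F f).Nonempty :=
  let ⟨x, hx, _⟩ := h
  ⟨x, hx⟩

lemma eq_of_nontrivial_Idom_inter (h₁ : f₁ ∈ F) (h₂ : f₂ ∈ F)
    (h : (Idom xm xp F f₁ ∩ Idom xm xp F f₂).Nontrivial) : f₁ = f₂ := by
  obtain ⟨p, hp, q, hq, hpq⟩ := h
  exact eq_of_aeval_eq_of_ne hpq (le_antisymm (hp.1.2 f₂ h₂) (hp.2.2 f₁ h₁))
    (le_antisymm (hq.1.2 f₂ h₂) (hq.2.2 f₁ h₁))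

lemma fst_neg_of_mem_Idom_inter_undercut (h₁ : f₁ ∈ F) (h₂ : f₂ ∈ F) {x₁ y₁ x₂ : ℝ}
    (hx₁ : x₁ ∈ undercut F g) (hy₁ : y₁ ∈ Idom xm xp F f₁ \ undercut F g)
    (hyx₁ : y₁ < x₁) (hneg : f₁.1 < 0) (hx₂ : x₂ ∈ Idom xm xp F f₂ ∩ undercut F g) :
    f₂.1 < 0 := by
  have hyx : y₁ < x₂ := lt_of_not_ge fun h =>
    hy₁.2 ((ordConnected_undercut F g).out hx₂.2 hx₁ ⟨h, hyx₁.le⟩)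
  exact (fst_le_fst_of_aeval_le_of_aeval_le hyx (hy₁.1.2 f₂ h₂) (hx₂.1.2 f₁ h₁)).trans_lt hneg

lemma keyF_le_keyF_insert (hne : (Idom xm xp (insert g F) f).Nonempty) :
    keyF xm xp F f ≤ keyF xm xp (insert g F) f :=
  csInf_le_csInf (isCompact_image_Idom xm xp F f).bddBelow (hne.image _)
    (image_mono fun _ hx => (mem_Idom_insert.1 hx).1)

lemma exists_of_keyF_lt_keyF_insert (hf : f ∈ F) (hne : (Idom xm xp (insert g F) f).Nonempty)
    (hk : keyF xm xp F f < keyF xm xp (insert g F) f) :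
    ∃ x ∈ Idom xm xp F f ∩ undercut F g, ∃ y ∈ Idom xm xp F f \ undercut F g,
      aeval f x < aeval f y := by
  obtain ⟨y, hy⟩ := hne
  obtain ⟨hyF, hyg⟩ := mem_Idom_insert.1 hy
  obtain ⟨x, hx, hkx⟩ := (isCompact_image_Idom xm xp F f).sInf_mem ⟨_, mem_image_of_mem _ hyF⟩
  have hgx : aeval g x < aeval f x := by
    by_contra! h
    exact (keyF_le_aeval (mem_Idom_insert.2 ⟨hx, h⟩)).not_gt (hkx ▸ hk)
  refine ⟨x, ⟨hx, fun f' hf' => hgx.trans_le (hx.2 f' hf')⟩, y,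
    ⟨hyF, fun h => (h f hf).not_ge hyg⟩, ?_⟩
  calc aeval f x = keyF xm xp F f := hkx
    _ < keyF xm xp (insert g F) f := hk
    _ ≤ aeval f y := keyF_le_aeval hy

theorem eq_of_keyF_lt_keyF_insert (h₁ : f₁ ∈ F) (h₂ : f₂ ∈ F)
    (hne₁ : (Idom xm xp (insert g F) f₁).Nonempty) (hne₂ : (Idom xm xp (insert g F) f₂).Nonempty)
    (hk₁ : keyF xm xp F f₁ < keyF xm xp (insert g F) f₁)
    (hk₂ : keyF xm xp F f₂ < keyF xm xp (insert g F) f₂) : f₁ = f₂ := by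
  obtain ⟨x₁, hx₁, y₁, hy₁, hlt₁⟩ := exists_of_keyF_lt_keyF_insert h₁ hne₁ hk₁
  obtain ⟨x₂, hx₂, y₂, hy₂, hlt₂⟩ := exists_of_keyF_lt_keyF_insert h₂ hne₂ hk₂
  have hS := ordConnected_undercut F g
  have hI₁ := ordConnected_Idom xm xp F f₁
  have hI₂ := ordConnected_Idom xm xp F f₂
  rcases (ne_of_apply_ne (aeval f₁) hlt₁.ne).lt_or_gt with hxy₁ | hyx₁ <;>
    rcases (ne_of_apply_ne (aeval f₂) hlt₂.ne).lt_or_gt with hxy₂ | hyx₂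
  · exact eq_of_nontrivial_Idom_inter h₁ h₂
      (hS.inter_nontrivial_of_lt hI₁ hI₂ hx₁ hy₁ hx₂ hy₂ hxy₁ hxy₂)
  · exact absurd (fst_pos_of_aeval_lt_aeval hxy₁ hlt₁) (fst_neg_of_mem_Idom_inter_undercut h₂ h₁
      hx₂.2 hy₂ hyx₂ (fst_neg_of_aeval_lt_aeval hyx₂ hlt₂) hx₁).not_gt
  · exact absurd (fst_pos_of_aeval_lt_aeval hxy₂ hlt₂) (fst_neg_of_mem_Idom_inter_undercut h₁ h₂
      hx₁.2 hy₁ hyx₁ (fst_neg_of_aeval_lt_aeval hyx₁ hlt₁) hx₂).not_gt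
  · exact eq_of_nontrivial_Idom_inter h₁ h₂
      (hS.dual.inter_nontrivial_of_lt hI₁.dual hI₂.dual hx₁ hy₁ hx₂ hy₂ hyx₁ hyx₂)

end Envelope

theorem stmt7_general (xm xp : ℝ) (F : Finset (ℝ × ℝ)) (g : ℝ × ℝ) :
    (∀ f ∈ F, NonDom xm xp (insert g F) f →
      keyF xm xp F f ≤ keyF xm xp (insert g F) f) ∧
    (∀ f₁ ∈ F, ∀ f₂ ∈ F,
      NonDom xm xp (insert g F) f₁ → NonDom xm xp (insert g F) f₂ →
      keyF xm xp F f₁ < keyF xm xp (insert g F) f₁ →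
      keyF xm xp F f₂ < keyF xm xp (insert g F) f₂ → f₁ = f₂) :=
  ⟨fun _ _ hnd => keyF_le_keyF_insert hnd.nonempty,
    fun _ h₁ _ h₂ hnd₁ hnd₂ hk₁ hk₂ =>
      eq_of_keyF_lt_keyF_insert h₁ h₂ hnd₁.nonempty hnd₂.nonempty hk₁ hk₂⟩

/-- Let `F` be a finite set of affine functions all of which are
non-dominated in `F`, let `g` be a further affine function and `F' = F ∪ {g}`.  Then
(i) `key_{F'}(f) ≥ key_F(f)` for every `f ∈ F` that is non-dominated in `F'`, and
(ii) there is at most one `f ∈ F` non-dominated in `F'` with `key_{F'}(f) > key_F(f)`. -/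
theorem stmt7 (xm xp : ℝ) (hx : xm < xp) (F : Finset (ℝ × ℝ))
    (hF : ∀ f ∈ F, NonDom xm xp F f) (g : ℝ × ℝ) :
    (∀ f ∈ F, NonDom xm xp (insert g F) f →
      keyF xm xp F f ≤ keyF xm xp (insert g F) f) ∧
    (∀ f₁ ∈ F, ∀ f₂ ∈ F,
      NonDom xm xp (insert g F) f₁ → NonDom xm xp (insert g F) f₂ →
      keyF xm xp F f₁ < keyF xm xp (insert g F) f₁ →
      keyF xm xp F f₂ < keyF xm xp (insert g F) f₂ → f₁ = f₂) :=
  stmt7_general xm xp F g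
end
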